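/- Let λ₀ ∈ (0,1], δ := λ₀/200, and λ₁ ∈ [λ₀/2, λ₀]. There exists a constant C, depending only on λ₀, such that for all t, y, b ∈ [0,∞) with b ≤ y one has exp(λ(t,y+b) − λ(t,y)) − 1 ≤ C · exp((3λ₁/5)⟨b⟩^{1/3}) · ⟨y⟩^{−2/3}. -/

import Mathlib

noncomputable section

/-- Japanese bracket `⟨r⟩ = (1+r²)^(1/2)`. -/
def jap (r : ℝ) : ℝ := Real.sqrt (1 + r ^ 2)


lemma jap_pos (r : ℝ) : 0 < jap r := Real.sqrt_pos.2 (by positivity)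

lemma one_le_jap (r : ℝ) : 1 ≤ jap r := by
  rw [jap]
  exact Real.le_sqrt_of_sq_le (by nlinarith [sq_nonneg r])

lemma le_jap {r : ℝ} (h : 0 ≤ r) : r ≤ jap r := by
  rw [jap]
  exact Real.le_sqrt_of_sq_le (by nlinarith)

lemma jap_le_jap {a b : ℝ} (h0 : 0 ≤ a) (h : a ≤ b) : jap a ≤ jap b :=
  Real.sqrt_le_sqrt (by nlinarith)

lemma jap_add_le {y b : ℝ} (hy : 0 ≤ y) (hb : 0 ≤ b) : jap (y + b) ≤ jap y + b := by
  have hjp := jap_pos y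
  have h1 : jap y + b = Real.sqrt ((jap y + b)^2) :=
    (Real.sqrt_sq (by nlinarith : (0:ℝ) ≤ jap y + b)).symm
  rw [jap, h1]
  apply Real.sqrt_le_sqrt
  have hyj : y ≤ jap y := le_jap hy
  have : (jap y)^2 = 1 + y^2 := Real.sq_sqrt (by positivity)
  nlinarith

lemma cube_rpow_third {x : ℝ} (hx : 0 ≤ x) : (x ^ ((1:ℝ)/3)) ^ (3:ℕ) = x := by
  rw [← Real.rpow_natCast (x ^ ((1:ℝ)/3)) 3, ← Real.rpow_mul hx]
  norm_num

lemma sq_rpow_third {x : ℝ} (hx : 0 ≤ x) : (x ^ ((1:ℝ)/3)) ^ (2:ℕ) = x ^ ((2:ℝ)/3) := by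
  rw [← Real.rpow_natCast (x ^ ((1:ℝ)/3)) 2, ← Real.rpow_mul hx]
  norm_num

lemma rpow_third_mono {u v : ℝ} (hu : 0 ≤ u) (huv : u ≤ v) :
    u ^ ((1:ℝ)/3) ≤ v ^ ((1:ℝ)/3) :=
  Real.rpow_le_rpow hu huv (by norm_num)

/-- Key: `v^{1/3} - u^{1/3} ≤ (b/3) u^{-2/3}`. -/
lemma cuberoot_diff {u v b : ℝ} (hu : 1 ≤ u) (huv : u ≤ v) (hvb : v ≤ u + b) (hb : 0 ≤ b) :
    v ^ ((1:ℝ)/3) ≤ u ^ ((1:ℝ)/3) + b / 3 * u ^ (-(2:ℝ)/3) := by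
  have hu0 : (0:ℝ) < u := lt_of_lt_of_le one_pos hu
  set a := u ^ ((1:ℝ)/3) with ha
  set c := b / 3 * u ^ (-(2:ℝ)/3) with hc
  have ha0 : 0 < a := Real.rpow_pos_of_pos hu0 _
  have hc0 : 0 ≤ c := by positivity
  have key : v ≤ (a + c) ^ (3:ℕ) := by
    have h3 : a ^ (3:ℕ) = u := cube_rpow_third hu0.le
    have h2 : a ^ (2:ℕ) * u ^ (-(2:ℝ)/3) = 1 := by
      rw [sq_rpow_third hu0.le, ← Real.rpow_add hu0]
      norm_num
    have expand : (a + c) ^ (3:ℕ) = a^(3:ℕ) + 3*a^(2:ℕ)*c + 3*a*c^2 + c^3 := by ring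
    have : a^(3:ℕ) + 3*a^(2:ℕ)*c = u + b := by
      rw [h3, hc, show 3 * a^(2:ℕ) * (b/3 * u ^ (-(2:ℝ)/3)) = b * (a^(2:ℕ) * u ^ (-(2:ℝ)/3)) by ring, h2]
      ring
    nlinarith [pow_nonneg hc0 3, sq_nonneg c, mul_nonneg ha0.le (sq_nonneg c)]
  have hv0 : 0 ≤ v := le_trans hu0.le huv
  calc v ^ ((1:ℝ)/3) ≤ ((a + c) ^ (3:ℕ)) ^ ((1:ℝ)/3) :=
        Real.rpow_le_rpow hv0 key (by norm_num)
    _ = a + c := by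
        rw [← Real.rpow_natCast (a+c) 3, ← Real.rpow_mul (by positivity)]
        norm_num

lemma eight_rpow_third : (8:ℝ) ^ ((1:ℝ)/3) = 2 := by
  rw [show (8:ℝ) = 2 ^ (3:ℕ) by norm_num, ← Real.rpow_natCast 2 3, ← Real.rpow_mul (by norm_num)]
  norm_num

/-- The weight exponent `λ(t,r)`. -/
def lamW (lam1 δ t r : ℝ) : ℝ :=
  lam1 * jap r ^ ((1:ℝ)/3) + δ * (1 + t) ^ (-δ) * jap r ^ ((1:ℝ)/3)
    + δ * (1 + t * jap r ^ (-(2:ℝ)/3)) ^ (-δ) * jap r ^ ((1:ℝ)/3)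

lemma num_lemma {lam1 δ X : ℝ} (hδ0 : 0 < δ) (hδl : δ ≤ lam1 / 100)
    (hδ1 : δ ≤ 1 / 200) (hX : 0 ≤ X) :
    (lam1 + δ) * (X / 3) + δ * (4 * δ / 3 * X + X / 3) ≤ 2 * lam1 / 5 * X := by
  nlinarith [mul_nonneg hδ0.le hX, mul_nonneg (mul_nonneg hδ0.le hδ0.le) hX,
    mul_le_mul_of_nonneg_right hδl hX, mul_le_mul_of_nonneg_right hδ1 (mul_nonneg hδ0.le hX),
    mul_le_mul_of_nonneg_right hδl (mul_nonneg hδ0.le hX)]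

set_option maxHeartbeats 1000000 in
lemma lam_diff_le (lam0 lam1 : ℝ) (h0 : 0 < lam0) (h1 : lam0 ≤ 1)
    (hl : lam0 / 2 ≤ lam1) (hl2 : lam1 ≤ lam0) (t y b : ℝ) (ht : 0 ≤ t)
    (hb : 0 ≤ b) (hby : b ≤ y) :
    lamW lam1 (lam0 / 200) t (y + b) - lamW lam1 (lam0 / 200) t y ≤
      2 * lam1 / 5 * (b * jap y ^ (-(2:ℝ)/3)) := by
  have hy : 0 ≤ y := hb.trans hby
  simp only [lamW]
  set δ := lam0 / 200 with hδdef
  have hδ0 : 0 < δ := by rw [hδdef]; positivity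
  have hδl : δ ≤ lam1 / 100 := by rw [hδdef]; linarith
  have hδ1 : δ ≤ 1 / 200 := by rw [hδdef]; linarith
  have hlam1 : 0 < lam1 := by linarith
  set u := jap y with hudef
  set v := jap (y + b) with hvdef
  have hu1 : 1 ≤ u := one_le_jap y
  have hv1 : 1 ≤ v := one_le_jap (y + b)
  have hu0 : (0:ℝ) < u := lt_of_lt_of_le one_pos hu1
  have hv0 : (0:ℝ) < v := lt_of_lt_of_le one_pos hv1
  have huv : u ≤ v := jap_le_jap hy (by linarith only [hb])
  have hvb : v ≤ u + b := jap_add_le hy hb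
  have hyu : y ≤ u := le_jap hy
  have e23 : (-(2:ℝ)/3) = -((2:ℝ)/3) := by norm_num
  set U := u ^ ((1:ℝ)/3) with hU
  set V := v ^ ((1:ℝ)/3) with hV
  set Um := u ^ (-(2:ℝ)/3) with hUmdef
  set Vm := v ^ (-(2:ℝ)/3) with hVmdef
  have hU0 : 0 < U := Real.rpow_pos_of_pos hu0 _
  have hV0 : 0 < V := Real.rpow_pos_of_pos hv0 _
  have hUm0 : 0 < Um := Real.rpow_pos_of_pos hu0 _
  have hVm0 : 0 < Vm := Real.rpow_pos_of_pos hv0 _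
  have hUV : U ≤ V := rpow_third_mono hu0.le huv
  have hVUb : V ≤ U + b / 3 * Um := cuberoot_diff hu1 huv hvb hb
  have hV2U : V ≤ 2 * U := by
    have h8 : v ≤ 8 * u := by linarith only [hvb, hby, hyu, hu0]
    calc V ≤ (8 * u) ^ ((1:ℝ)/3) := rpow_third_mono hv0.le h8
      _ = 2 * U := by rw [Real.mul_rpow (by norm_num) hu0.le, eight_rpow_third]
  have hUmu : Um * u = U := by
    rw [hUmdef, hU]
    nth_rewrite 2 [show u = u ^ (1:ℝ) from (Real.rpow_one u).symm]
    rw [← Real.rpow_add hu0]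
    norm_num
  set A := 1 + t * Um with hA
  set B := 1 + t * Vm with hB
  have hA1 : 1 ≤ A := by
    have := mul_nonneg ht hUm0.le; rw [hA]; linarith only [this]
  have hB1 : 1 ≤ B := by
    have := mul_nonneg ht hVm0.le; rw [hB]; linarith only [this]
  have hA0 : 0 < A := lt_of_lt_of_le one_pos hA1
  have hB0 : 0 < B := lt_of_lt_of_le one_pos hB1
  set p := A ^ (-δ) with hp
  set q := B ^ (-δ) with hq
  have hp0 : 0 < p := Real.rpow_pos_of_pos hA0 _
  have hq0 : 0 < q := Real.rpow_pos_of_pos hB0 _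
  have hp1 : p ≤ 1 := Real.rpow_le_one_of_one_le_of_nonpos hA1 (by linarith only [hδ0])
  set E := (1 + t) ^ (-δ) with hE
  have hE0 : 0 ≤ E := (Real.rpow_pos_of_pos (by linarith only [ht]) _).le
  have hE1 : E ≤ 1 := Real.rpow_le_one_of_one_le_of_nonpos (by linarith only [ht]) (by linarith only [hδ0])
  -- ratio bound
  set w := (v / u) ^ ((2:ℝ)/3) with hw
  set ρ := w ^ δ with hρ
  have hvu1 : 1 ≤ v / u := (one_le_div hu0).2 huv
  have hw1 : 1 ≤ w := by
    calc (1:ℝ) = 1 ^ ((2:ℝ)/3) := (Real.one_rpow _).symm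
      _ ≤ w := Real.rpow_le_rpow zero_le_one hvu1 (by norm_num)
  have hw0 : 0 < w := lt_of_lt_of_le one_pos hw1
  have hρ1 : 1 ≤ ρ := by
    calc (1:ℝ) = 1 ^ δ := (Real.one_rpow _).symm
      _ ≤ ρ := Real.rpow_le_rpow zero_le_one hw1 hδ0.le
  have hwVm : w * Vm = Um := by
    rw [hw, hVmdef, hUmdef, e23, Real.rpow_neg hv0.le, Real.rpow_neg hu0.le,
      Real.div_rpow hv0.le hu0.le]
    have h2v : (0:ℝ) < v ^ ((2:ℝ)/3) := Real.rpow_pos_of_pos hv0 _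
    have h2u : (0:ℝ) < u ^ ((2:ℝ)/3) := Real.rpow_pos_of_pos hu0 _
    field_simp
  have hABw : A ≤ B * w := by
    have hkey : B * w = w + t * Um := by rw [← hwVm]; ring
    rw [hA, hkey]
    linarith only [hw1]
  have hqpρ : q ≤ p * ρ := by
    have hAδ : (0:ℝ) < A ^ δ := Real.rpow_pos_of_pos hA0 _
    have hBδ : (0:ℝ) < B ^ δ := Real.rpow_pos_of_pos hB0 _
    have hwδ : (0:ℝ) < w ^ δ := Real.rpow_pos_of_pos hw0 _
    have hkey : A ^ δ ≤ B ^ δ * w ^ δ := by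
      rw [← Real.mul_rpow hB0.le hw0.le]
      exact Real.rpow_le_rpow hA0.le hABw hδ0.le
    rw [hq, hp, hρ, Real.rpow_neg hA0.le, Real.rpow_neg hB0.le]
    calc (B ^ δ)⁻¹ = (A ^ δ)⁻¹ * (B ^ δ)⁻¹ * A ^ δ := by field_simp
      _ ≤ (A ^ δ)⁻¹ * (B ^ δ)⁻¹ * (B ^ δ * w ^ δ) :=
          mul_le_mul_of_nonneg_left hkey (by positivity)
      _ = (A ^ δ)⁻¹ * w ^ δ := by field_simp
  -- Bernoulli bounds
  have hvub : v / u - 1 ≤ b / u := by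
    have h1 : v / u ≤ (u + b) / u := by gcongr
    have h2 : (u + b) / u = 1 + b / u := by field_simp
    linarith [h1.trans_eq h2]
  have hwle : w ≤ 1 + 2 / 3 * (v / u - 1) := by
    have h := rpow_one_add_le_one_add_mul_self
      (s := v / u - 1) (by linarith only [hvu1]) (p := (2:ℝ)/3) (by norm_num) (by norm_num)
    rw [show (1:ℝ) + (v / u - 1) = v / u by ring] at h
    rw [hw]; linarith only [h]
  have hρle : ρ ≤ 1 + δ * (2 / 3 * (b / u)) := by
    have h := rpow_one_add_le_one_add_mul_self
      (s := w - 1) (by linarith only [hw1]) (p := δ) hδ0.le (by linarith only [hδ1])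
    rw [show (1:ℝ) + (w - 1) = w by ring] at h
    rw [hρ]
    have hprod : δ * (w - 1) ≤ δ * (2 / 3 * (b / u)) :=
      mul_le_mul_of_nonneg_left (by linarith only [hwle, hvub]) hδ0.le
    linarith only [h, hprod]
  -- core term-3 bound
  have hcore : q * V - p * U ≤ (ρ - 1) * V + (V - U) := by
    have h1 : q * V ≤ p * ρ * V := mul_le_mul_of_nonneg_right hqpρ hV0.le
    have hnn : 0 ≤ ρ * V - U := by
      have := mul_le_mul_of_nonneg_right hρ1 hV0.le
      rw [one_mul] at this; linarith only [this, hUV]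
    have h2 : p * ρ * V - p * U ≤ ρ * V - U := by
      have hexp : 0 ≤ (1 - p) * (ρ * V - U) := mul_nonneg (by linarith only [hp1]) hnn
      linarith only [hexp]
    linarith only [h1, h2]
  have h3 : (ρ - 1) * V ≤ δ * (2 / 3 * (b / u)) * (2 * U) := by
    apply mul_le_mul (by linarith only [hρle]) hV2U hV0.le (by positivity)
  have h4 : δ * (2 / 3 * (b / u)) * (2 * U) = 4 * δ / 3 * (b * Um) := by
    rw [← hUmu]; field_simp; ring
  have hT3 : q * V - p * U ≤ 4 * δ / 3 * (b * Um) + b / 3 * Um := by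
    rw [← h4]; linarith only [hcore, h3, hVUb]
  -- combine
  have hbUm : 0 ≤ b * Um := mul_nonneg hb hUm0.le
  have hnum : (lam1 + δ) * (b / 3 * Um) + δ * (4 * δ / 3 * (b * Um) + b / 3 * Um) ≤
      2 * lam1 / 5 * (b * Um) := by
    have := num_lemma (X := b * Um) hδ0 hδl hδ1 hbUm
    linarith only [this]
  have hT12 : (lam1 + δ * E) * (V - U) ≤ (lam1 + δ) * (b / 3 * Um) := by
    have hcoE : lam1 + δ * E ≤ lam1 + δ := by
      have := mul_le_mul_of_nonneg_left hE1 hδ0.le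
      linarith only [this]
    have hcoE0 : 0 ≤ lam1 + δ * E := by
      have := mul_nonneg hδ0.le hE0; linarith only [this, hlam1]
    apply mul_le_mul hcoE (by linarith only [hVUb]) (by linarith only [hUV]) (by linarith only [hlam1, hδ0])
  have hT3' : δ * (q * V - p * U) ≤ δ * (4 * δ / 3 * (b * Um) + b / 3 * Um) :=
    mul_le_mul_of_nonneg_left hT3 hδ0.le
  have hexpand : lam1 * (V - U) + δ * E * (V - U) = (lam1 + δ * E) * (V - U) := by ring
  linarith only [hT12, hT3', hnum, hexpand]

set_option maxHeartbeats 1000000 in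
theorem stmt6 (lam0 : ℝ) (h0 : 0 < lam0) (h1 : lam0 ≤ 1) :
    ∃ C : ℝ, 0 < C ∧ ∀ lam1 : ℝ, lam0 / 2 ≤ lam1 → lam1 ≤ lam0 →
      ∀ t y b : ℝ, 0 ≤ t → 0 ≤ b → b ≤ y →
        Real.exp (lamW lam1 (lam0 / 200) t (y + b) - lamW lam1 (lam0 / 200) t y) - 1 ≤
          C * Real.exp ((3 * lam1 / 5) * jap b ^ ((1:ℝ)/3)) * jap y ^ (-(2:ℝ)/3) := by
  refine ⟨27000 / lam0 ^ 3, by positivity, ?_⟩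
  intro lam1 hl hl2 t y b ht hb hby
  have hy : 0 ≤ y := hb.trans hby
  have hlam1 : 0 < lam1 := by linarith
  have hjb1 : 1 ≤ jap b := one_le_jap b
  have hjb0 : (0:ℝ) < jap b := lt_of_lt_of_le one_pos hjb1
  have hjy0 : (0:ℝ) < jap y := jap_pos y
  have hΔD := lam_diff_le lam0 lam1 h0 h1 hl hl2 t y b ht hb hby
  set Um := jap y ^ (-(2:ℝ)/3) with hUmdef
  set W := jap b ^ ((1:ℝ)/3) with hWdef
  have hW1 : 1 ≤ W := by
    calc (1:ℝ) = 1 ^ ((1:ℝ)/3) := (Real.one_rpow _).symm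
      _ ≤ W := Real.rpow_le_rpow zero_le_one hjb1 (by norm_num)
  have hW0 : (0:ℝ) < W := lt_of_lt_of_le one_pos hW1
  have hUm0 : 0 < Um := Real.rpow_pos_of_pos hjy0 _
  set D := 2 * lam1 / 5 * (b * Um) with hDdef
  have hbUm0 : 0 ≤ b * Um := mul_nonneg hb hUm0.le
  have h25 : 0 ≤ 2 * lam1 / 5 := by linarith
  have hD0 : 0 ≤ D := mul_nonneg h25 hbUm0
  have hbW : b * Um ≤ W := by
    have hr1 : Um ≤ jap b ^ (-(2:ℝ)/3) :=
      Real.rpow_le_rpow_of_nonpos hjb0 (jap_le_jap hb hby) (by norm_num)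
    have hr2 : b * Um ≤ jap b * jap b ^ (-(2:ℝ)/3) :=
      mul_le_mul (le_jap hb) hr1 hUm0.le hjb0.le
    have hr3 : jap b * jap b ^ (-(2:ℝ)/3) = W := by
      rw [hWdef]
      nth_rewrite 1 [show jap b = jap b ^ (1:ℝ) from (Real.rpow_one _).symm]
      rw [← Real.rpow_add hjb0]; norm_num
    linarith only [hr2, hr3.le]
  have hDW : D ≤ 2 * lam1 / 5 * W := mul_le_mul_of_nonneg_left hbW h25
  have hED : Real.exp D - 1 ≤ D * Real.exp D := by
    have hh1 : -D + 1 ≤ Real.exp (-D) := Real.add_one_le_exp _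
    have hh2 : (-D + 1) * Real.exp D ≤ Real.exp (-D) * Real.exp D :=
      mul_le_mul_of_nonneg_right hh1 (Real.exp_pos D).le
    rw [← Real.exp_add, neg_add_cancel, Real.exp_zero] at hh2
    linarith only [hh2]
  set s := lam1 / 5 * W with hsdef
  have hs0 : 0 ≤ s := mul_nonneg (by linarith) hW0.le
  have hcube : s ^ 3 ≤ 27 * Real.exp s := by
    have hh1 : s / 3 + 1 ≤ Real.exp (s / 3) := Real.add_one_le_exp _
    have hh2 : (s / 3) ^ 3 ≤ Real.exp (s / 3) ^ 3 :=
      pow_le_pow_left₀ (by positivity) (by linarith only [hh1]) 3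
    have hh3 : Real.exp (s / 3) ^ 3 = Real.exp s := by
      rw [← Real.exp_nat_mul]; norm_num; ring
    calc s ^ 3 = 27 * (s / 3) ^ 3 := by ring
      _ ≤ 27 * Real.exp s := by rw [hh3] at hh2; linarith only [hh2]
  have hbC : b ≤ 27000 / lam0 ^ 3 * Real.exp s := by
    have hbj : b ≤ jap b := le_jap hb
    have hjW : jap b = W ^ 3 := (cube_rpow_third hjb0.le).symm
    have hWs : W ≤ 10 / lam0 * s := by
      have hmm : lam0 * W ≤ 2 * lam1 * W :=
        mul_le_mul_of_nonneg_right (by linarith) hW0.le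
      rw [hsdef, show 10 / lam0 * (lam1 / 5 * W) = 2 * lam1 * W / lam0 by ring,
        le_div_iff₀ h0]
      linarith only [hmm]
    have hW3 : W ^ 3 ≤ (10 / lam0) ^ 3 * s ^ 3 := by
      calc W ^ 3 ≤ (10 / lam0 * s) ^ 3 := pow_le_pow_left₀ hW0.le hWs 3
        _ = (10 / lam0) ^ 3 * s ^ 3 := by ring
    calc b ≤ jap b := hbj
      _ = W ^ 3 := hjW
      _ ≤ (10 / lam0) ^ 3 * s ^ 3 := hW3
      _ ≤ (10 / lam0) ^ 3 * (27 * Real.exp s) :=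
          mul_le_mul_of_nonneg_left hcube (by positivity)
      _ = 27000 / lam0 ^ 3 * Real.exp s := by field_simp; ring
  calc Real.exp (lamW lam1 (lam0 / 200) t (y + b) - lamW lam1 (lam0 / 200) t y) - 1
      ≤ Real.exp D - 1 := by
        have := Real.exp_le_exp.2 hΔD; linarith only [this]
    _ ≤ D * Real.exp D := hED
    _ ≤ D * Real.exp (2 * lam1 / 5 * W) :=
        mul_le_mul_of_nonneg_left (Real.exp_le_exp.2 hDW) hD0
    _ ≤ b * Um * Real.exp (2 * lam1 / 5 * W) := by
        apply mul_le_mul_of_nonneg_right ?_ (Real.exp_pos _).le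
        have h25' : 2 * lam1 / 5 ≤ 1 := by linarith
        have := mul_le_mul_of_nonneg_right h25' hbUm0
        rw [hDdef]; linarith only [this]
    _ ≤ 27000 / lam0 ^ 3 * Real.exp s * Um * Real.exp (2 * lam1 / 5 * W) := by
        apply mul_le_mul_of_nonneg_right ?_ (Real.exp_pos _).le
        exact mul_le_mul_of_nonneg_right hbC hUm0.le
    _ = 27000 / lam0 ^ 3 * Real.exp (3 * lam1 / 5 * W) * Um := by
        rw [show 27000 / lam0 ^ 3 * Real.exp s * Um * Real.exp (2 * lam1 / 5 * W)
            = 27000 / lam0 ^ 3 * (Real.exp s * Real.exp (2 * lam1 / 5 * W)) * Um by ring,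
          ← Real.exp_add, hsdef, show lam1 / 5 * W + 2 * lam1 / 5 * W = 3 * lam1 / 5 * W by ring]
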